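/- arXiv:2401.16671 — 4 statements merged into one kernel-verified Lean document; each statement's English description precedes it below -/
import Mathlib

section
/- For every n ≥ 0, the polynomial C_n has degree exactly 3n + 2, its coefficient of X^{3n+2} equals 1/(3^{n+1}·(n+1)!), and its coefficient of X^{3n+1} equals 0. -/
open Polynomial

lemma coeff_Lp (p : Polynomial ℂ) (k : ℕ) :
    (p + X * derivative p - derivative (derivative p)).coeff k
      = ((k : ℂ) + 1) * p.coeff k - ((k : ℂ) + 2) * ((k : ℂ) + 1) * p.coeff (k + 2) := by
  rcases k with _ | k
  · simp [coeff_derivative, mul_coeff_zero]; ring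
  · simp [coeff_derivative, coeff_X_mul]; ring

lemma coeff_Rp (p : Polynomial ℂ) (k : ℕ) :
    (X * (X ^ 2 - 2) * p - (2 * X ^ 2 - 1) * derivative p
        + X * derivative (derivative p)).coeff (k + 3)
      = p.coeff k - (2 * (k : ℂ) + 6) * p.coeff (k + 2)
          + ((k : ℂ) + 4) ^ 2 * p.coeff (k + 4) := by
  have h : X * (X ^ 2 - 2) * p - (2 * X ^ 2 - 1) * derivative p
        + X * derivative (derivative p)
      = X ^ 3 * p - 2 * (X * p) - 2 * (X ^ 2 * derivative p) + derivative p
        + X * derivative (derivative p) := by ring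
  rw [h]
  have h1 : (X ^ 3 * p).coeff (k + 3) = p.coeff k := coeff_X_pow_mul p 3 k
  have h2 : (X ^ 2 * derivative p).coeff (k + 3) = (derivative p).coeff (k + 1) :=
    coeff_X_pow_mul (derivative p) 2 (k + 1)
  have h3 : (X * p).coeff (k + 3) = p.coeff (k + 2) := coeff_X_mul p (k + 2)
  have h4 : (X * derivative (derivative p)).coeff (k + 3)
      = (derivative (derivative p)).coeff (k + 2) := coeff_X_mul _ (k + 2)
  simp only [coeff_add, coeff_sub, coeff_smul, h1, h3, h4, coeff_ofNat_mul, h2,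
    coeff_derivative]
  push_cast
  ring

lemma degree_Lp (p : Polynomial ℂ) :
    (p + X * derivative p - derivative (derivative p)).degree = p.degree := by
  rcases eq_or_ne p 0 with rfl | hp
  · simp
  have hD := p.degree_eq_natDegree hp
  set D := p.natDegree with hDdef
  have hle : (p + X * derivative p - derivative (derivative p)).degree ≤ (D : WithBot ℕ) := by
    rw [degree_le_iff_coeff_zero]
    intro m hm
    have hm' : D < m := by exact_mod_cast hm
    have e1 : p.coeff m = 0 := p.coeff_eq_zero_of_natDegree_lt hm'
    have e2 : p.coeff (m + 2) = 0 := p.coeff_eq_zero_of_natDegree_lt (by omega)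
    rw [coeff_Lp, e1, e2]; ring
  have hne : (p + X * derivative p - derivative (derivative p)).coeff D ≠ 0 := by
    have e2 : p.coeff (D + 2) = 0 := p.coeff_eq_zero_of_natDegree_lt (by omega)
    rw [coeff_Lp, e2]
    have h1 : ((D : ℂ) + 1) ≠ 0 := by
      have : ((D : ℂ) + 1) = ((D + 1 : ℕ) : ℂ) := by push_cast; ring
      rw [this]; exact_mod_cast Nat.succ_ne_zero D
    have h2 : p.coeff D ≠ 0 := p.coeff_ne_zero_of_eq_degree hD
    simpa using mul_ne_zero h1 h2
  rw [hD]
  exact le_antisymm hle (le_degree_of_ne_zero hne)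

/-- The defining property of the sequence of polynomials `C_n`. -/
def IsCSeq (Cs : ℕ → Polynomial ℂ) : Prop :=
  Cs 0 = Polynomial.C ((1 : ℂ)/3) * (X ^ 2 - 1) ∧
  ∀ n : ℕ, 1 ≤ n →
    Cs n + X * derivative (Cs n) - derivative (derivative (Cs n)) =
      X * (X ^ 2 - 2) * Cs (n - 1)
        - (2 * X ^ 2 - 1) * derivative (Cs (n - 1))
        + X * derivative (derivative (Cs (n - 1)))

/-- For every `n ≥ 0`, `C_n` has degree exactly `3n + 2`, its coefficient of `X^{3n+2}`
equals `1/(3^{n+1}·(n+1)!)`, and its coefficient of `X^{3n+1}` equals `0`. -/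
theorem CSeq_degree_and_leading_coeffs (Cs : ℕ → Polynomial ℂ) (hCs : IsCSeq Cs) (n : ℕ) :
    (Cs n).degree = ((3 * n + 2 : ℕ) : WithBot ℕ) ∧
    (Cs n).coeff (3 * n + 2) = 1 / ((3 : ℂ) ^ (n + 1) * ((n + 1).factorial : ℂ)) ∧
    (Cs n).coeff (3 * n + 1) = 0 := by
  induction n with
  | zero =>
    rw [hCs.1]
    refine ⟨?_, ?_, ?_⟩
    · compute_degree!
    · norm_num [coeff_C_mul, coeff_sub, coeff_one, coeff_X_pow]
    · norm_num [coeff_C_mul, coeff_sub, coeff_one, coeff_X_pow]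
  | succ n ih =>
    obtain ⟨hdeg, ha, hb⟩ := ih
    set p := Cs n with hp
    set a : ℂ := 1 / ((3 : ℂ) ^ (n + 1) * ((n + 1).factorial : ℂ)) with hadef
    -- zero coefficients above the degree
    have hz : ∀ m : ℕ, 3 * n + 2 < m → p.coeff m = 0 := fun m hm =>
      coeff_eq_zero_of_degree_lt (hdeg ▸ (by exact_mod_cast hm))
    have hE := hCs.2 (n + 1) (by omega)
    simp only [Nat.add_sub_cancel] at hE
    set R := X * (X ^ 2 - 2) * p - (2 * X ^ 2 - 1) * derivative p
        + X * derivative (derivative p) with hR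
    -- degree of R
    have hRtop : R.coeff (3 * n + 5) = a := by
      have : (3 : ℕ) * n + 5 = (3 * n + 2) + 3 := by omega
      rw [this, hR, coeff_Rp, ha, hz (3 * n + 2 + 2) (by omega), hz (3 * n + 2 + 4) (by omega)]
      ring
    have hane : a ≠ 0 := by
      rw [hadef]
      apply one_div_ne_zero
      exact mul_ne_zero (pow_ne_zero _ (by norm_num)) (Nat.cast_ne_zero.mpr (Nat.factorial_ne_zero _))
    have hRle : R.degree ≤ ((3 * n + 5 : ℕ) : WithBot ℕ) := by
      rw [degree_le_iff_coeff_zero]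
      intro m hm
      have hm' : 3 * n + 5 < m := by exact_mod_cast hm
      obtain ⟨k, rfl⟩ : ∃ k, m = k + 3 := ⟨m - 3, by omega⟩
      rw [hR, coeff_Rp, hz k (by omega), hz (k + 2) (by omega), hz (k + 4) (by omega)]
      ring
    have hRdeg : R.degree = ((3 * n + 5 : ℕ) : WithBot ℕ) :=
      le_antisymm hRle (le_degree_of_ne_zero (hRtop ▸ hane))
    -- degree of Cs (n+1)
    have hq : (Cs (n + 1)).degree = ((3 * n + 5 : ℕ) : WithBot ℕ) := by
      rw [← degree_Lp (Cs (n + 1)), hE, hRdeg]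
    have hqz : ∀ m : ℕ, 3 * n + 5 < m → (Cs (n + 1)).coeff m = 0 := fun m hm =>
      coeff_eq_zero_of_degree_lt (hq ▸ (by exact_mod_cast hm))
    have idx1 : 3 * (n + 1) + 2 = 3 * n + 5 := by omega
    have idx2 : 3 * (n + 1) + 1 = 3 * n + 4 := by omega
    refine ⟨by rw [idx1, hq], ?_, ?_⟩
    · -- leading coefficient
      rw [idx1]
      have hL := coeff_Lp (Cs (n + 1)) (3 * n + 5)
      rw [hE, hRtop, hqz (3 * n + 5 + 2) (by omega), mul_zero, sub_zero] at hL
      have h36 : ((3 * n + 5 : ℕ) : ℂ) + 1 ≠ 0 := by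
        have e : ((3 * n + 5 : ℕ) : ℂ) + 1 = ((3 * n + 6 : ℕ) : ℂ) := by push_cast; ring
        rw [e]
        exact_mod_cast (by omega : (3 * n + 6 : ℕ) ≠ 0)
      have hc : (Cs (n + 1)).coeff (3 * n + 5) = a / (((3 * n + 5 : ℕ) : ℂ) + 1) := by
        rw [eq_div_iff h36]
        linear_combination -hL
      rw [hc, hadef, Nat.factorial_succ (n + 1)]
      have h3 : (3 : ℂ) ^ (n + 1) ≠ 0 := pow_ne_zero _ (by norm_num)
      have hfne : ((n + 1).factorial : ℂ) ≠ 0 :=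
        Nat.cast_ne_zero.mpr (Nat.factorial_ne_zero _)
      have hn2 : ((n : ℂ) + 1 + 1) ≠ 0 := by
        have : ((n : ℂ) + 1 + 1) = ((n + 2 : ℕ) : ℂ) := by push_cast; ring
        rw [this]; exact_mod_cast (by omega : (n + 2 : ℕ) ≠ 0)
      have h36' : (3 * (n : ℂ) + 5 + 1) ≠ 0 := by
        have : (3 * (n : ℂ) + 5 + 1) = ((3 * n + 6 : ℕ) : ℂ) := by push_cast; ring
        rw [this]; exact_mod_cast (by omega : (3 * n + 6 : ℕ) ≠ 0)
      push_cast
      field_simp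
      ring
    · -- subleading coefficient is zero
      rw [idx2]
      have hL := coeff_Lp (Cs (n + 1)) (3 * n + 4)
      have hR0 : R.coeff (3 * n + 4) = 0 := by
        have e : (3 : ℕ) * n + 4 = (3 * n + 1) + 3 := by omega
        rw [e, hR, coeff_Rp, hb, hz (3 * n + 1 + 2) (by omega), hz (3 * n + 1 + 4) (by omega)]
        ring
      rw [hE, hR0, hqz (3 * n + 4 + 2) (by omega), mul_zero, sub_zero] at hL
      have h35 : ((3 * n + 4 : ℕ) : ℂ) + 1 ≠ 0 := by
        have e : ((3 * n + 4 : ℕ) : ℂ) + 1 = ((3 * n + 5 : ℕ) : ℂ) := by push_cast; ring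
        rw [e]
        exact_mod_cast (by omega : (3 * n + 5 : ℕ) ≠ 0)
      exact (mul_eq_zero.mp hL.symm).resolve_left h35
end

section
/- For every n ≥ 0 and every τ ∈ ℂ, C_n(−τ) = (−1)^n · C_n(τ); that is, the even-order polynomials C_{2m} are even functions and the odd-order polynomials C_{2m+1} are odd functions. -/
open Polynomial



lemma L_ker (P : ℂ[X]) (h : P + X * derivative P - derivative (derivative P) = 0) :
    P = 0 := by
  by_contra hP
  rcases Nat.eq_zero_or_pos P.natDegree with hd | hpos
  · obtain ⟨a, rfl⟩ := Polynomial.natDegree_eq_zero.mp hd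
    simp at h
    exact hP (by simp [h])
  · obtain ⟨m, hd⟩ := Nat.exists_eq_succ_of_ne_zero (Nat.pos_iff_ne_zero.mp hpos)
    have hcoeff : P.coeff (m + 1) ≠ 0 := by
      rw [show m + 1 = P.natDegree by omega]
      exact Polynomial.coeff_ne_zero_of_eq_degree (degree_eq_natDegree hP)
    have h1 : (X * derivative P).coeff (m + 1) = P.coeff (m + 1) * (m + 1) := by
      rw [Polynomial.coeff_X_mul, Polynomial.coeff_derivative]
    have h3 : (derivative (derivative P)).coeff (m + 1) = 0 := by
      apply coeff_eq_zero_of_natDegree_lt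
      have := natDegree_derivative_le (derivative P)
      have := natDegree_derivative_le P
      omega
    have hc := congrArg (fun q : ℂ[X] => q.coeff (m + 1)) h
    simp only [coeff_add, coeff_sub, coeff_zero, h1, h3] at hc
    have hz : P.coeff (m + 1) * ((m : ℂ) + 2) = 0 := by linear_combination hc
    have h2 : ((m : ℂ) + 2) ≠ 0 := by
      intro hzz
      have : (m + 2 : ℕ) = 0 := by exact_mod_cast hzz
      omega
    exact hcoeff ((mul_eq_zero.mp hz).resolve_right h2)

lemma L_inj (P Q : ℂ[X])
    (h : P + X * derivative P - derivative (derivative P)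
       = Q + X * derivative Q - derivative (derivative Q)) : P = Q := by
  have := L_ker (P - Q) (by
    simp only [derivative_sub]
    linear_combination h)
  exact sub_eq_zero.mp this

lemma deriv_comp_negX (p : ℂ[X]) :
    (derivative p).comp (-X) = -derivative (p.comp (-X)) := by
  rw [derivative_comp, derivative_neg, derivative_X]
  ring

/-- For every `n ≥ 0` and every `τ ∈ ℂ`, `C_n(−τ) = (−1)^n · C_n(τ)`: the even-order
polynomials are even functions and the odd-order polynomials are odd functions. -/
theorem CSeq_parity (Cs : ℕ → Polynomial ℂ) (hCs : IsCSeq Cs) (n : ℕ) (τ : ℂ) :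
    (Cs n).eval (-τ) = (-1) ^ n * (Cs n).eval τ := by
  have key : ∀ m : ℕ, (Cs m).comp (-X) = (-1 : ℂ[X]) ^ m * Cs m := by
    intro m
    induction m with
    | zero =>
      rw [hCs.1]
      simp [mul_comp, sub_comp, pow_comp, C_comp, X_comp, one_comp]
    | succ k ih =>
      have hrec := hCs.2 (k + 1) (by omega)
      simp only [Nat.add_sub_cancel] at hrec
      set A := Cs (k + 1) with hA
      set B := Cs k with hB
      have hcomp := congrArg (fun p : ℂ[X] => p.comp (-X)) hrec
      simp only [add_comp, sub_comp, mul_comp, X_comp, pow_comp, one_comp, ofNat_comp,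
        deriv_comp_negX, derivative_neg] at hcomp
      rw [ih] at hcomp
      apply L_inj
      simp only [derivative_mul, derivative_pow, derivative_neg, derivative_one,
        mul_zero, zero_mul, neg_zero, zero_add, add_zero, mul_neg, neg_neg, neg_mul,
        Nat.cast_ofNat] at hcomp ⊢
      linear_combination hcomp + (-1 : ℂ[X]) ^ k * hrec
  have := congrArg (fun p : ℂ[X] => p.eval τ) (key n)
  simpa [eval_comp] using this
end

section
/- Write C_n(τ) = Σ_k c_{n,k} τ^k, where c_{n,k} denotes the coefficient of τ^k in C_n (with the convention c_{m,j} = 0 for j < 0). Then for every n ≥ 1 and every k ≥ 0, c_{n,k} = (k+2)·c_{n,k+2} + (k+1)·c_{n−1,k+1} − (2k/(k+1))·c_{n−1,k−1} + (1/(k+1))·c_{n−1,k−3}. -/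
open Polynomial

/-- The coefficient of `τ^j` in a polynomial, indexed by an integer `j`, with the
convention that it vanishes for `j < 0`. -/
noncomputable def coeffZ (P : Polynomial ℂ) (j : ℤ) : ℂ :=
  if 0 ≤ j then P.coeff j.toNat else 0
lemma coeffZ_natCast (P : Polynomial ℂ) (m : ℕ) : coeffZ P (m : ℤ) = P.coeff m := by
  simp [coeffZ]

/-- Writing `C_n(τ) = Σ_k c_{n,k} τ^k` (with `c_{m,j} = 0` for `j < 0`), for every
`n ≥ 1` and `k ≥ 0`:
`c_{n,k} = (k+2)·c_{n,k+2} + (k+1)·c_{n−1,k+1} − (2k/(k+1))·c_{n−1,k−1}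
           + (1/(k+1))·c_{n−1,k−3}`. -/
theorem CSeq_coeff_recurrence (Cs : ℕ → Polynomial ℂ) (hCs : IsCSeq Cs)
    (n : ℕ) (hn : 1 ≤ n) (k : ℕ) :
    (Cs n).coeff k =
      ((k : ℂ) + 2) * (Cs n).coeff (k + 2)
      + ((k : ℂ) + 1) * (Cs (n - 1)).coeff (k + 1)
      - (2 * (k : ℂ) / ((k : ℂ) + 1)) * coeffZ (Cs (n - 1)) ((k : ℤ) - 1)
      + (1 / ((k : ℂ) + 1)) * coeffZ (Cs (n - 1)) ((k : ℤ) - 3) := by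
  set P := Cs n with hP
  set Q := Cs (n-1) with hQ
  have h := hCs.2 n hn
  rw [← hP, ← hQ] at h
  have key : P + X^1 * derivative P - derivative (derivative P) =
      X^3 * Q - 2 * (X^1 * Q) - 2 * (X^2 * derivative Q) + derivative Q
        + X^1 * derivative (derivative Q) := by linear_combination h
  have hc := congrArg (fun p => p.coeff k) key
  simp only [coeff_add, coeff_sub, coeff_ofNat_mul, coeff_X_pow_mul', coeff_derivative] at hc
  rcases k with _ | _ | _ | k
  · norm_num [coeffZ] at hc ⊢
    linear_combination hc
  · norm_num [coeffZ] at hc ⊢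
    linear_combination (1/2 : ℂ) * hc
  · norm_num [coeffZ] at hc ⊢
    field_simp
    linear_combination hc
  · have e1 : ((k + 3 : ℕ) : ℤ) - 1 = ((k + 2 : ℕ) : ℤ) := by push_cast; ring
    have e3 : ((k + 3 : ℕ) : ℤ) - 3 = ((k : ℕ) : ℤ) := by push_cast; ring
    rw [e1, e3, coeffZ_natCast, coeffZ_natCast]
    norm_num at hc ⊢
    push_cast at hc ⊢
    have hne : ((k:ℂ) + 1 + 1 + 1 + 1) ≠ 0 := by
      have h4 : ((k:ℂ) + 1 + 1 + 1 + 1) = ((k + 4 : ℕ) : ℂ) := by push_cast; ring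
      rw [h4]
      exact_mod_cast Nat.succ_ne_zero (k+3)
    field_simp [hne]
    linear_combination hc
end

section
/- For every real number x ≥ 0 one has x³ + 1 − x > 0 and exp( ((x²/3) + 1) · x / (x³ + 1 − x) ) < 4. -/
/-- For every real `x ≥ 0`, `x³ + 1 − x > 0` and
`exp( ((x²/3) + 1)·x / (x³ + 1 − x) ) < 4`. -/
theorem exp_bound_for_pFun (x : ℝ) (hx : 0 ≤ x) :
    0 < x ^ 3 + 1 - x ∧
    Real.exp ((x ^ 2 / 3 + 1) * x / (x ^ 3 + 1 - x)) < 4 := by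
  have hpos : 0 < x ^ 3 + 1 - x := by
    nlinarith [mul_nonneg hx (sq_nonneg (x - 1)), sq_nonneg (x - 1/2)]
  refine ⟨hpos, ?_⟩
  have h1 : (x ^ 2 / 3 + 1) * x / (x ^ 3 + 1 - x) ≤ 1.384 := by
    rw [div_le_iff₀ hpos]
    nlinarith [mul_nonneg hx (sq_nonneg (x - 0.87)), sq_nonneg (x - 0.87), sq_nonneg x]
  calc Real.exp ((x ^ 2 / 3 + 1) * x / (x ^ 3 + 1 - x)) ≤ Real.exp 1.384 :=
        Real.exp_le_exp.mpr h1
    _ < 4 := by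
        rw [show (4:ℝ) = Real.exp (Real.log 4) by rw [Real.exp_log]; norm_num]
        apply Real.exp_lt_exp.mpr
        have h2 : Real.log 4 = 2 * Real.log 2 := by
          rw [show (4:ℝ) = 2^2 by norm_num, Real.log_pow]; push_cast; ring
        have := Real.log_two_gt_d9
        rw [h2]; linarith
end
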